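/- Let ε ∈ (0, e^{−1}), a ∈ [0,1], b ∈ [0,1], j ≥ 0 an integer, K a positive integer with K > 1000·ν⁶ where ν := (j+1)·log(K/ε), and s an integer with 0 ≤ s ≤ j. Assume ⌈a⌉ < ⌊a + 2bK⌋. Then ∑_{m=s}^{j} |w_{s,m,a,b,K}| ≤ (e/√(2b)) · (1 + 1/(2bK))^j · ∑_{g=0}^{j} (j/(2bK))^g. -/

import Mathlib

/-! The three exponentials in `wcoef` have modulus one, so `‖w_{s,m}‖` is bounded by a sum over the
pairs `(l, r)` with `m = s + l + 2r`. With `β = 2bK`, the powers of `√2`, `√π` and `√b` cancel and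
the `(l, r)` term becomes `(1/√(2b)) (q/β)^s (m!/s!) |a|^l / (l! r! β^(l+r) (4πK)^r)`.
Since `q ≤ 1 + β`, `m!/s! ≤ j^(l+2r)`, `|a| ≤ 1` and `j ≤ 4πK` (this is where the size of `K`
enters), it is at most `(1/√(2b)) (1 + 1/β)^j (j/β)^(l+r) / r!`. The map `(m, r) ↦ (l + r, r)` is
injective, so the whole sum is at most `(1/√(2b)) (1 + 1/β)^j Σ_g (j/β)^g · Σ_r 1/r!`, and
`Σ_r 1/r! ≤ e`. -/

open scoped BigOperators

/-- The coefficients `w_{s,m,a,b,K}` of the theta algorithm. -/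
noncomputable def wcoef (s m K : ℕ) (a b : ℝ) : ℂ :=
  ((⌊a + 2 * b * K⌋ : ℤ) : ℂ) ^ s *
    ((m.factorial : ℂ) * ((Real.sqrt (2 * Real.pi) : ℝ) : ℂ) *
        Complex.exp (Complex.I * (Real.pi : ℂ) / 4) *
        Complex.exp (3 * (Real.pi : ℂ) * Complex.I * ((m - s : ℕ) : ℂ) / 4) *
        Complex.exp (-(Complex.I) * (Real.pi : ℂ) * (a : ℂ) ^ 2 / (2 * (b : ℂ)))) /
      (((Real.sqrt 2 : ℝ) : ℂ) ^ m * (s.factorial : ℂ) *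
        (((2 * Real.sqrt (Real.pi * b)) : ℝ) : ℂ) ^ (m + 1) * (K : ℂ) ^ m) *
    (((Real.sqrt (2 * Real.pi / b) : ℝ) : ℂ)) ^ s *
    ∑ l ∈ Finset.range (m - s + 1),
      (if (m - s - l) % 2 = 0 then (1 : ℂ) else 0) * (-1 : ℂ) ^ ((m + l - s) / 2) /
          ((l.factorial : ℂ) * (((m - s - l) / 2).factorial : ℂ)) *
        ((a : ℂ) * Complex.exp (-(3 * (Real.pi : ℂ) * Complex.I) / 4) *
          ((Real.sqrt (2 * Real.pi / b) : ℝ) : ℂ)) ^ l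

open Finset Real
open scoped Nat

lemma factorial_add_le_factorial_mul_pow {s n j : ℕ} (h : s + n ≤ j) : (s + n)! ≤ s ! * j ^ n := by
  rw [← Nat.factorial_mul_ascFactorial]
  exact Nat.mul_le_mul_left _ ((Nat.ascFactorial_le_pow_add s n).trans (Nat.pow_le_pow_left h n))

lemma sum_range_ite_even_sub_eq_sum_range_half {M : Type*} [AddCommMonoid M] (n : ℕ)
    (h : ℕ → ℕ → M) :
    ∑ l ∈ range (n + 1), (if (n - l) % 2 = 0 then h l ((n - l) / 2) else 0) =
      ∑ r ∈ range (n / 2 + 1), h (n - 2 * r) r := by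
  rw [← sum_filter]
  refine sum_nbij' (fun l => (n - l) / 2) (fun r => n - 2 * r) ?_ ?_ ?_ ?_ ?_ <;> intro x hx <;>
    simp only [mem_filter, mem_range] at hx ⊢
  all_goals first | omega | rw [show n - 2 * ((n - x) / 2) = x by omega]

lemma norm_wcoef_le (s m K : ℕ) (a b : ℝ) :
    ‖wcoef s m K a b‖ ≤ |(⌊a + 2 * b * K⌋ : ℝ)| ^ s * (m ! * √(2 * π)) /
          (√2 ^ m * s ! * (2 * √(π * b)) ^ (m + 1) * K ^ m) * √(2 * π / b) ^ s *
        ∑ r ∈ range ((m - s) / 2 + 1),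
          (|a| * √(2 * π / b)) ^ (m - s - 2 * r) / ((m - s - 2 * r)! * r !) := by
  have hexp (z : ℂ) (hz : z.re = 0) : ‖Complex.exp z‖ = 1 := by
    rw [Complex.norm_exp, hz, Real.exp_zero]
  rw [wcoef, norm_mul, ← sum_range_ite_even_sub_eq_sum_range_half (m - s)
    fun l r => (|a| * √(2 * π / b)) ^ l / (l ! * r !)]
  refine mul_le_mul (le_of_eq ?_)
    ((norm_sum_le _ _).trans (le_of_eq (sum_congr rfl fun l _ => ?_)))
    (norm_nonneg _) (by positivity)
  · simp (disch := simp [Complex.div_re, ← Complex.ofReal_pow]) only [norm_mul, norm_div, norm_pow,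
      hexp, Complex.norm_real, Complex.norm_natCast, Complex.norm_intCast, Real.norm_eq_abs,
      abs_two, abs_of_nonneg (Real.sqrt_nonneg _), mul_one]
  · split_ifs
    · simp (disch := simp) only [norm_mul, norm_div, norm_pow, hexp, norm_neg, norm_one, one_pow,
        Complex.norm_real, Complex.norm_natCast, Real.norm_eq_abs,
        abs_of_nonneg (Real.sqrt_nonneg _), mul_one, one_mul]
      ring
    · simp

lemma wcoef_prefactor_eq {b K : ℝ} (hb : 0 < b) (hK : 0 < K) (s l r : ℕ) :
    √(2 * π) * √(2 * π / b) ^ (s + l) /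
        (√2 ^ (s + l + 2 * r) * (2 * √(π * b)) ^ (s + l + 2 * r + 1) * K ^ (s + l + 2 * r)) =
      1 / √(2 * b) * (1 / (2 * b * K)) ^ (s + l + r) * (1 / (4 * π * K)) ^ r := by
  have key {x y z : ℝ} (hx : x ≠ 0) (hy : y ≠ 0) (hz : z ≠ 0) :
      x * y * (x * y / z) ^ (s + l) /
        (x ^ (s + l + 2 * r) * (x ^ 2 * (y * z)) ^ (s + l + 2 * r + 1) * K ^ (s + l + 2 * r)) =
      1 / (x * z) * (1 / (x ^ 2 * z ^ 2 * K)) ^ (s + l + r) *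
        (1 / (x ^ 2 * x ^ 2 * y ^ 2 * K)) ^ r := by
    simp only [div_pow, one_pow]
    field_simp
    ring
  have h2 : (0 : ℝ) ≤ 2 := zero_le_two
  have := key (Real.sqrt_pos.2 two_pos).ne' (Real.sqrt_pos.2 pi_pos).ne' (Real.sqrt_pos.2 hb).ne'
  rw [Real.sq_sqrt h2, Real.sq_sqrt pi_pos.le, Real.sq_sqrt hb.le,
    show (2 : ℝ) * 2 = 4 by norm_num] at this
  rwa [Real.sqrt_div (by positivity), Real.sqrt_mul h2, Real.sqrt_mul h2, Real.sqrt_mul pi_pos.le]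

lemma wcoef_term_le {s l r j : ℕ} {a b K q : ℝ} (hb : 0 < b) (hK : 0 < K) (ha : |a| ≤ 1)
    (hq : |q| ≤ 1 + 2 * b * K) (hm : s + l + 2 * r ≤ j) (hjK : (j : ℝ) ≤ 4 * π * K) :
    |q| ^ s * ((s + l + 2 * r)! * √(2 * π)) /
          (√2 ^ (s + l + 2 * r) * s ! * (2 * √(π * b)) ^ (s + l + 2 * r + 1) *
            K ^ (s + l + 2 * r)) *
        √(2 * π / b) ^ s * ((|a| * √(2 * π / b)) ^ l / (l ! * r !)) ≤
      1 / √(2 * b) * (1 + 1 / (2 * b * K)) ^ j * (j / (2 * b * K)) ^ (l + r) / r ! := by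
  have hP := wcoef_prefactor_eq hb hK s l r
  set β := 2 * b * K with hβ_def
  have hβ : 0 < β := by positivity
  have hfac : ((s + l + 2 * r)! : ℝ) / s ! ≤ j ^ (l + r) * j ^ r := by
    have h := factorial_add_le_factorial_mul_pow (s := s) (n := l + 2 * r) (j := j) (by omega)
    rw [← add_assoc] at h
    rw [div_le_iff₀ (by positivity), ← pow_add, show l + r + r = l + 2 * r by ring]
    exact_mod_cast h.trans_eq (mul_comm _ _)
  have hqβ : (|q| / β) ^ s ≤ (1 + 1 / β) ^ j := by
    refine (pow_le_pow_left₀ (by positivity) ?_ s).trans (pow_le_pow_right₀ ?_ (by omega))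
    · rwa [div_le_iff₀ hβ, add_mul, one_div_mul_cancel hβ.ne', one_mul, add_comm]
    · exact le_add_of_nonneg_right (by positivity)
  have ha_l : |a| ^ l / l ! ≤ 1 :=
    div_le_one_of_le₀
      ((pow_le_one₀ (abs_nonneg a) ha).trans (by exact_mod_cast Nat.factorial_pos l))
      (by positivity)
  have hjr : ((j : ℝ) / (4 * π * K)) ^ r ≤ 1 :=
    pow_le_one₀ (by positivity) ((div_le_one (by positivity)).2 hjK)
  calc _ = 1 / √(2 * b) * ((|q| / β) ^ s * ((s + l + 2 * r)! / s !) * (|a| ^ l / l !) *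
          (1 / (4 * π * K)) ^ r) * (1 / β) ^ (l + r) / r ! := by
        calc _ = |q| ^ s * ((s + l + 2 * r)! / s !) * (|a| ^ l / l !) / r ! *
              (√(2 * π) * √(2 * π / b) ^ (s + l) / (√2 ^ (s + l + 2 * r) *
                (2 * √(π * b)) ^ (s + l + 2 * r + 1) * K ^ (s + l + 2 * r))) := by
              rw [mul_pow, pow_add]; ring
          _ = _ := by rw [hP]; ring
    _ ≤ 1 / √(2 * b) * ((1 + 1 / β) ^ j * (j ^ (l + r) * j ^ r) * 1 *
          (1 / (4 * π * K)) ^ r) * (1 / β) ^ (l + r) / r ! := by gcongr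
    _ = 1 / √(2 * b) * (1 + 1 / β) ^ j * (j / β) ^ (l + r) * (j / (4 * π * K)) ^ r / r ! := by
        simp only [div_pow]; ring
    _ ≤ _ := div_le_div_of_nonneg_right (mul_le_of_le_one_right (by positivity) hjr) (by positivity)

lemma norm_wcoef_le_sum_range_half {s m j K : ℕ} {a b : ℝ} (hb : 0 < b) (hK : 0 < (K : ℝ))
    (ha : |a| ≤ 1) (hq : |(⌊a + 2 * b * K⌋ : ℝ)| ≤ 1 + 2 * b * K) (hm : m ∈ Icc s j)
    (hjK : (j : ℝ) ≤ 4 * π * K) :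
    ‖wcoef s m K a b‖ ≤ ∑ r ∈ range ((m - s) / 2 + 1),
      1 / √(2 * b) * (1 + 1 / (2 * b * K)) ^ j * (j / (2 * b * K)) ^ (m - s - r) / r ! := by
  refine (norm_wcoef_le s m K a b).trans ?_
  rw [mul_sum]
  refine sum_le_sum fun r hr => ?_
  rw [mem_Icc] at hm
  rw [mem_range] at hr
  obtain ⟨l, rfl⟩ : ∃ l, m = s + l + 2 * r := ⟨m - s - 2 * r, by omega⟩
  rw [show s + l + 2 * r - s - 2 * r = l by omega, show s + l + 2 * r - s - r = l + r by omega]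
  exact wcoef_term_le hb hK ha hq hm.2 hjK

lemma sum_Icc_sum_range_half_le_sum_range_sum_range {F : ℕ → ℕ → ℝ} (hF : ∀ g r, 0 ≤ F g r)
    (s j : ℕ) :
    ∑ m ∈ Icc s j, ∑ r ∈ range ((m - s) / 2 + 1), F (m - s - r) r ≤
      ∑ g ∈ range (j + 1), ∑ r ∈ range (j + 1), F g r := by
  rw [sum_sigma', ← sum_product']
  rw [← sum_image (s := (Icc s j).sigma fun m => range ((m - s) / 2 + 1))
    (g := fun p => (p.1 - s - p.2, p.2)) (f := fun p => F p.1 p.2)]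
  · refine sum_le_sum_of_subset_of_nonneg ?_ fun _ _ _ => hF _ _
    intro p hp
    obtain ⟨⟨m, r⟩, hmr, rfl⟩ := mem_image.1 hp
    simp only [mem_sigma, mem_Icc, mem_range] at hmr
    simp only [mem_product, mem_range]
    omega
  · rintro ⟨m, r⟩ hp ⟨m', r'⟩ hp' h
    simp only [coe_sigma, Set.mem_sigma_iff, coe_Icc, Set.mem_Icc, coe_range, Set.mem_Iio,
      Prod.mk.injEq] at hp hp' h
    obtain ⟨hg, rfl⟩ := h
    obtain rfl : m = m' := by omega
    rfl

lemma one_le_of_ceil_lt_floor_add {a x : ℝ} (h : ⌈a⌉ < ⌊a + x⌋) : 1 ≤ x := by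
  have h1 : (⌈a⌉ : ℝ) + 1 ≤ ⌊a + x⌋ := by exact_mod_cast Int.add_one_le_of_lt h
  linarith [Int.le_ceil a, Int.floor_le (a + x)]

lemma abs_floor_add_le_one_add {a x : ℝ} (ha : a ∈ Set.Icc 0 1) (h : ⌈a⌉ < ⌊a + x⌋) :
    |(⌊a + x⌋ : ℝ)| ≤ 1 + x := by
  have h0 : (0 : ℝ) ≤ ⌊a + x⌋ := by exact_mod_cast (Int.ceil_nonneg ha.1).trans h.le
  rw [abs_of_nonneg h0]
  linarith [Int.floor_le (a + x), ha.2]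

lemma add_one_lt_of_thousand_mul_pow_lt {ε K : ℝ} {j : ℕ} (hε : ε ∈ Set.Ioo 0 (exp (-1)))
    (hK : 1 ≤ K) (h : 1000 * ((j + 1) * log (K / ε)) ^ 6 < K) : (j : ℝ) + 1 < K := by
  have hlog : 1 ≤ log (K / ε) := by
    rw [log_div (by positivity) hε.1.ne']
    linarith [log_nonneg hK, (log_lt_iff_lt_exp hε.1).2 hε.2]
  have hx : (j : ℝ) + 1 ≤ (j + 1) * log (K / ε) := le_mul_of_one_le_right (by positivity) hlog
  have hx6 := le_self_pow₀ ((le_add_of_nonneg_left j.cast_nonneg).trans hx) (by norm_num : 6 ≠ 0)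
  linarith

lemma sum_range_sum_range_div_factorial_le {f : ℕ → ℝ} (hf : ∀ g, 0 ≤ f g) (n N : ℕ) :
    ∑ g ∈ range n, ∑ r ∈ range N, f g / r ! ≤ exp 1 * ∑ g ∈ range n, f g := by
  rw [mul_sum]
  refine sum_le_sum fun g _ => ?_
  calc ∑ r ∈ range N, f g / r ! = f g * ∑ r ∈ range N, 1 ^ r / (r ! : ℝ) := by
        rw [mul_sum]; exact sum_congr rfl fun r _ => by ring
    _ ≤ f g * exp 1 := mul_le_mul_of_nonneg_left (sum_le_exp_of_nonneg zero_le_one N) (hf g)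
    _ = exp 1 * f g := mul_comm _ _

theorem wcoef_sum_bound_general (ε : ℝ) (hε : ε ∈ Set.Ioo 0 (Real.exp (-1)))
    (a b : ℝ) (ha : a ∈ Set.Icc (0 : ℝ) 1)
    (j K : ℕ)
    (hKbig : 1000 * (((j : ℝ) + 1) * Real.log ((K : ℝ) / ε)) ^ 6 < (K : ℝ))
    (s : ℕ)
    (hpq : (⌈a⌉ : ℤ) < ⌊a + 2 * b * K⌋) :
    ∑ m ∈ Finset.Icc s j, ‖wcoef s m K a b‖ ≤
      (Real.exp 1 / Real.sqrt (2 * b)) * (1 + 1 / (2 * b * K)) ^ j *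
        ∑ g ∈ Finset.range (j + 1), ((j : ℝ) / (2 * b * K)) ^ g := by
  have hβ := one_le_of_ceil_lt_floor_add hpq
  have hK : 0 < K := Nat.pos_of_ne_zero (by rintro rfl; norm_num at hβ)
  have hK' : (0 : ℝ) < K := Nat.cast_pos.2 hK
  have hb : 0 < b := by
    have := pos_of_mul_pos_left (zero_lt_one.trans_le hβ) hK'.le
    linarith
  have hjK : (j : ℝ) ≤ 4 * π * K := by
    have := add_one_lt_of_thousand_mul_pow_lt hε (Nat.one_le_cast.2 hK) hKbig
    linarith [le_mul_of_one_le_left hK'.le (by linarith [pi_gt_three] : 1 ≤ 4 * π)]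
  have ha' : |a| ≤ 1 := abs_le.2 ⟨by linarith [ha.1], ha.2⟩
  have hA : 0 ≤ 1 / √(2 * b) * (1 + 1 / (2 * b * K)) ^ j := by positivity
  have hx : (0 : ℝ) ≤ j / (2 * b * K) := by positivity
  set A := 1 / √(2 * b) * (1 + 1 / (2 * b * K)) ^ j with hA_def
  calc _ ≤ ∑ m ∈ Icc s j, ∑ r ∈ range ((m - s) / 2 + 1),
          A * (j / (2 * b * K)) ^ (m - s - r) / r ! :=
        sum_le_sum fun m hm =>
          norm_wcoef_le_sum_range_half hb hK' ha' (abs_floor_add_le_one_add ha hpq) hm hjK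
    _ ≤ ∑ g ∈ range (j + 1), ∑ r ∈ range (j + 1), A * (j / (2 * b * K)) ^ g / r ! :=
        sum_Icc_sum_range_half_le_sum_range_sum_range
          (fun g r => div_nonneg (mul_nonneg hA (pow_nonneg hx g)) r.factorial.cast_nonneg) s j
    _ ≤ exp 1 * ∑ g ∈ range (j + 1), A * (j / (2 * b * K)) ^ g :=
        sum_range_sum_range_div_factorial_le (fun g => mul_nonneg hA (pow_nonneg hx g)) _ _
    _ = _ := by rw [← mul_sum, hA_def]; ring

/-- Bound on the coefficient sums `∑_{m=s}^{j} |w_{s,m,a,b,K}|`. -/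
theorem wcoef_sum_bound (ε : ℝ) (hε : ε ∈ Set.Ioo 0 (Real.exp (-1)))
    (a b : ℝ) (ha : a ∈ Set.Icc (0 : ℝ) 1) (hb : b ∈ Set.Icc (0 : ℝ) 1)
    (j K : ℕ) (hK : 0 < K)
    (hKbig : 1000 * (((j : ℝ) + 1) * Real.log ((K : ℝ) / ε)) ^ 6 < (K : ℝ))
    (s : ℕ) (hs : s ≤ j)
    (hpq : (⌈a⌉ : ℤ) < ⌊a + 2 * b * K⌋) :
    ∑ m ∈ Finset.Icc s j, ‖wcoef s m K a b‖ ≤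
      (Real.exp 1 / Real.sqrt (2 * b)) * (1 + 1 / (2 * b * K)) ^ j *
        ∑ g ∈ Finset.range (j + 1), ((j : ℝ) / (2 * b * K)) ^ g :=
  wcoef_sum_bound_general ε hε a b ha j K hKbig s hpq
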